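/- For all φ₀, φ₁ with 0 < φ₀ < φ₁ < π/2, the map T_{C_r}(α) := 2T(α) + T₁(α, φ₀) − T₁(α, φ₁) satisfies T_{C_r}(α) → T_* as α → φ₁⁺ and T_{C_r}(α) > T_* for every α ∈ (φ₁, π/2), where T_* := T(φ₁) + T₁(φ₁, φ₀). -/

import Mathlib

open Real Filter

/-- The time map `T(α) = ∫₀^α dx / √(cos 2x − cos 2α)`. -/
noncomputable def timeMapT (α : ℝ) : ℝ :=
  ∫ x in (0:ℝ)..α, 1 / Real.sqrt (Real.cos (2 * x) - Real.cos (2 * α))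

/-- The time map `T₁(α, φ) = ∫₀^φ dx / √(cos 2x − cos 2α)`. -/
noncomputable def timeMapT1 (α φ : ℝ) : ℝ :=
  ∫ x in (0:ℝ)..φ, 1 / Real.sqrt (Real.cos (2 * x) - Real.cos (2 * α))

/-! With `f α x = 1 / √(cos 2x − cos 2α)`,
`T_{C_r}(α) − T_* = 2 (T(α) − T(φ₁)) + ∫_{φ₀}^{φ₁} (f φ₁ − f α)`.
Since `cos 2α` decreases in `α`, so does `f α x`, and the integral is nonnegative. The substitution
`x = u α` gives `T(α) = ∫₀¹ α f α (u α) du`, and `(α f α (u α))⁻²` factors as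
`2 (1 − u²) · sinc (α (1 + u)) · sinc (α (1 − u))`; as `sinc` is strictly decreasing on `(0, π)`
(concavity of `sin`), `T` is strictly increasing. The limit follows from right-continuity of `T`
and of `α ↦ T₁(α, φ)`, both by dominated convergence (by the integrand at a larger `α`, resp. by
`f φ₁`), together with `T₁(φ₁, φ₁) = T(φ₁)`. The singularity at `x = α` is integrable because
`cos 2x − cos 2α ≥ (2/π) sin 2α · (α − x)`.
-/

open MeasureTheory Set intervalIntegral Topology

noncomputable def timeMapIntegrand (α x : ℝ) : ℝ := 1 / √(cos (2 * x) - cos (2 * α))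

lemma cos_two_mul_sub_cos_two_mul (x α : ℝ) :
    cos (2 * x) - cos (2 * α) = 2 * sin (α + x) * sin (α - x) := by
  rw [cos_sub_cos, show (2 * x + 2 * α) / 2 = α + x by ring,
    show (2 * x - 2 * α) / 2 = -(α - x) by ring, sin_neg]
  ring

lemma cos_two_mul_sub_cos_two_mul_pos {x α : ℝ} (hx : 0 ≤ x) (hxα : x < α) (hα : α ≤ π / 2) :
    0 < cos (2 * x) - cos (2 * α) := by
  rw [cos_two_mul_sub_cos_two_mul]
  have := sin_pos_of_pos_of_lt_pi (x := α + x) (by linarith) (by linarith)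
  have := sin_pos_of_pos_of_lt_pi (x := α - x) (by linarith) (by linarith [pi_pos])
  positivity

lemma mul_sub_le_cos_two_mul_sub_cos_two_mul {x α : ℝ} (hx : 0 ≤ x) (hxα : x ≤ α)
    (hα : α ≤ π / 2) :
    2 / π * sin (2 * α) * (α - x) ≤ cos (2 * x) - cos (2 * α) := by
  have hsinα : 0 ≤ sin α := sin_nonneg_of_nonneg_of_le_pi (by linarith) (by linarith [pi_pos])
  have hcosα : 0 ≤ cos α := cos_nonneg_of_mem_Icc ⟨by linarith [pi_pos], hα⟩
  have hsin_add : sin α * cos α ≤ sin (α + x) := by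
    have hsinx : 0 ≤ sin x := sin_nonneg_of_nonneg_of_le_pi hx (by linarith [pi_pos])
    have hcosx : cos α ≤ cos x :=
      antitoneOn_cos ⟨hx, by linarith [pi_pos]⟩ ⟨by linarith, by linarith [pi_pos]⟩ hxα
    rw [sin_add]
    nlinarith [mul_nonneg hcosα hsinx, mul_le_mul_of_nonneg_left hcosx hsinα]
  have hsin_sub : 2 / π * (α - x) ≤ sin (α - x) := mul_le_sin (by linarith) (by linarith)
  calc 2 / π * sin (2 * α) * (α - x) = 2 * (sin α * cos α * (2 / π * (α - x))) := by
        rw [sin_two_mul]; ring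
    _ ≤ 2 * (sin (α + x) * sin (α - x)) := by
        gcongr 2 * ?_
        exact mul_le_mul hsin_add hsin_sub (mul_nonneg (by positivity) (sub_nonneg.2 hxα))
          ((mul_nonneg hsinα hcosα).trans hsin_add)
    _ = cos (2 * x) - cos (2 * α) := by rw [cos_two_mul_sub_cos_two_mul]; ring

lemma timeMapIntegrand_nonneg (α x : ℝ) : 0 ≤ timeMapIntegrand α x := by
  unfold timeMapIntegrand; positivity

lemma measurable_timeMapIntegrand (α : ℝ) : Measurable (timeMapIntegrand α) := by
  unfold timeMapIntegrand; fun_prop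

lemma timeMapIntegrand_le_rpow {x α : ℝ} (hx : 0 ≤ x) (hxα : x ≤ α) (hα : α < π / 2) :
    timeMapIntegrand α x ≤ (√(2 / π * sin (2 * α)))⁻¹ * (α - x) ^ (-(1 / 2 : ℝ)) := by
  rcases hxα.eq_or_lt with rfl | hxα
  · simp [timeMapIntegrand]
  have hc : 0 < 2 / π * sin (2 * α) :=
    mul_pos (by positivity) (sin_pos_of_pos_of_lt_pi (by linarith) (by linarith))
  have hαx : 0 < α - x := by linarith
  calc timeMapIntegrand α x ≤ 1 / √(2 / π * sin (2 * α) * (α - x)) :=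
        one_div_le_one_div_of_le (by positivity)
          (sqrt_le_sqrt (mul_sub_le_cos_two_mul_sub_cos_two_mul hx hxα.le hα.le))
    _ = _ := by
        rw [sqrt_mul hc.le, rpow_neg hαx.le, ← sqrt_eq_rpow, one_div, mul_inv]

lemma intervalIntegrable_timeMapIntegrand {a b α : ℝ} (ha : 0 ≤ a) (hab : a ≤ b) (hbα : b ≤ α)
    (hα : α < π / 2) : IntervalIntegrable (timeMapIntegrand α) volume a b := by
  have hbound : IntervalIntegrable (fun x => (√(2 / π * sin (2 * α)))⁻¹ * (α - x) ^ (-(1 / 2 : ℝ)))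
      volume a b := by
    refine IntervalIntegrable.const_mul ?_ _
    simpa using (intervalIntegrable_rpow' (a := α - a) (b := α - b) (r := -(1 / 2))
      (by norm_num)).comp_sub_left α
  refine hbound.mono_fun' (measurable_timeMapIntegrand α).aestronglyMeasurable ?_
  refine ae_restrict_of_forall_mem measurableSet_uIoc fun x hx => ?_
  rw [uIoc_of_le hab] at hx
  dsimp only
  rw [norm_of_nonneg (timeMapIntegrand_nonneg α x)]
  exact timeMapIntegrand_le_rpow (ha.trans hx.1.le) (hx.2.trans hbα) hα

lemma timeMapIntegrand_le_of_le {x β α : ℝ} (hx : 0 ≤ x) (hxβ : x < β) (hβα : β ≤ α)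
    (hα : α ≤ π / 2) : timeMapIntegrand α x ≤ timeMapIntegrand β x := by
  have hcos : cos (2 * α) ≤ cos (2 * β) :=
    antitoneOn_cos ⟨by linarith, by linarith⟩ ⟨by linarith, by linarith⟩ (by linarith)
  exact one_div_le_one_div_of_le
    (sqrt_pos.2 (cos_two_mul_sub_cos_two_mul_pos hx hxβ (hβα.trans hα)))
    (sqrt_le_sqrt (by linarith))

lemma timeMapT1_sub_timeMapT1_le {φ₀ φ₁ β α : ℝ} (h₀ : 0 ≤ φ₀) (h₀₁ : φ₀ ≤ φ₁) (h₁ : φ₁ ≤ β)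
    (hβα : β ≤ α) (hα : α < π / 2) :
    timeMapT1 α φ₁ - timeMapT1 α φ₀ ≤ timeMapT1 β φ₁ - timeMapT1 β φ₀ := by
  change (∫ x in 0..φ₁, timeMapIntegrand α x) - (∫ x in 0..φ₀, timeMapIntegrand α x) ≤
    (∫ x in 0..φ₁, timeMapIntegrand β x) - (∫ x in 0..φ₀, timeMapIntegrand β x)
  have hintα {a b : ℝ} (ha : 0 ≤ a) (hab : a ≤ b) (hb : b ≤ φ₁) :
      IntervalIntegrable (timeMapIntegrand α) volume a b :=
    intervalIntegrable_timeMapIntegrand ha hab (by linarith) hα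
  have hintβ {a b : ℝ} (ha : 0 ≤ a) (hab : a ≤ b) (hb : b ≤ φ₁) :
      IntervalIntegrable (timeMapIntegrand β) volume a b :=
    intervalIntegrable_timeMapIntegrand ha hab (hb.trans h₁) (hβα.trans_lt hα)
  rw [integral_interval_sub_left (hintα le_rfl (h₀.trans h₀₁) le_rfl) (hintα le_rfl h₀ h₀₁),
    integral_interval_sub_left (hintβ le_rfl (h₀.trans h₀₁) le_rfl) (hintβ le_rfl h₀ h₀₁)]
  exact integral_mono_on_of_le_Ioo h₀₁ (hintα h₀ h₀₁ le_rfl) (hintβ h₀ h₀₁ le_rfl) fun x hx =>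
    timeMapIntegrand_le_of_le (h₀.trans hx.1.le) (hx.2.trans_le h₁) hβα hα.le

lemma sin_div_strictAntiOn : StrictAntiOn (fun x => sin x / x) (Ioc 0 π) := fun x hx y hy hxy => by
  simpa using strictConcaveOn_sin_Icc.secant_strict_mono (a := 0) ⟨le_rfl, pi_pos.le⟩
    (Ioc_subset_Icc_self hx) (Ioc_subset_Icc_self hy) hx.1.ne' hy.1.ne' hxy

noncomputable def scaledTimeMapIntegrand (β u : ℝ) : ℝ := β * timeMapIntegrand β (u * β)

lemma timeMapT_eq_integral_scaledTimeMapIntegrand (β : ℝ) :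
    timeMapT β = ∫ u in 0..1, scaledTimeMapIntegrand β u := by
  have h := smul_integral_comp_mul_right (a := 0) (b := 1) (timeMapIntegrand β) β
  rw [zero_mul, one_mul, smul_eq_mul, ← intervalIntegral.integral_const_mul] at h
  exact h.symm

lemma intervalIntegrable_scaledTimeMapIntegrand {β : ℝ} (hβ0 : 0 < β) (hβ : β < π / 2) :
    IntervalIntegrable (scaledTimeMapIntegrand β) volume 0 1 := by
  have h := (intervalIntegrable_timeMapIntegrand le_rfl hβ0.le le_rfl hβ).comp_mul_right (c := β)
  rw [zero_div, div_self hβ0.ne'] at h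
  exact h.const_mul β

lemma scaledTimeMapIntegrand_eq {β u : ℝ} (hβ : 0 < β) (hu₀ : -1 < u) (hu₁ : u < 1) :
    scaledTimeMapIntegrand β u = 1 / √(2 * ((1 + u) * (1 - u)) *
      (sin (β * (1 + u)) / (β * (1 + u)) * (sin (β * (1 - u)) / (β * (1 - u))))) := by
  have h1 : 0 < 1 + u := by linarith
  have h2 : 0 < 1 - u := by linarith
  have hden : cos (2 * (u * β)) - cos (2 * β) = β ^ 2 * (2 * ((1 + u) * (1 - u)) *
      (sin (β * (1 + u)) / (β * (1 + u)) * (sin (β * (1 - u)) / (β * (1 - u))))) := by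
    rw [cos_two_mul_sub_cos_two_mul]
    field_simp
  rw [scaledTimeMapIntegrand, timeMapIntegrand, hden, sqrt_mul (sq_nonneg β), sqrt_sq hβ.le]
  field_simp

lemma scaledTimeMapIntegrand_lt {β γ u : ℝ} (hβ : 0 < β) (hβγ : β < γ) (hγ : γ < π / 2)
    (hu₀ : -1 < u) (hu₁ : u < 1) :
    scaledTimeMapIntegrand β u < scaledTimeMapIntegrand γ u := by
  have hγ0 : 0 < γ := hβ.trans hβγ
  have h1 : 0 < 1 + u := by linarith
  have h2 : 0 < 1 - u := by linarith
  have hsinc {s : ℝ} (hs0 : 0 < s) (hs : s < 2) :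
      0 < sin (γ * s) / (γ * s) ∧ sin (γ * s) / (γ * s) < sin (β * s) / (β * s) := by
    have hγs : γ * s < π := by nlinarith
    refine ⟨div_pos (sin_pos_of_pos_of_lt_pi (by positivity) hγs) (by positivity), ?_⟩
    exact sin_div_strictAntiOn ⟨by positivity, by nlinarith⟩ ⟨by positivity, hγs.le⟩
      (mul_lt_mul_of_pos_right hβγ hs0)
  obtain ⟨hA0, hA⟩ := hsinc h1 (by linarith)
  obtain ⟨hB0, hB⟩ := hsinc h2 (by linarith)
  rw [scaledTimeMapIntegrand_eq hβ hu₀ hu₁, scaledTimeMapIntegrand_eq hγ0 hu₀ hu₁]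
  have hprod := mul_lt_mul'' hA hB hA0.le hB0.le
  gcongr

lemma timeMapT_strictMonoOn : StrictMonoOn timeMapT (Ioo 0 (π / 2)) := by
  intro β hβ γ hγ hβγ
  have hintβ := intervalIntegrable_scaledTimeMapIntegrand hβ.1 hβ.2
  have hintγ := intervalIntegrable_scaledTimeMapIntegrand hγ.1 hγ.2
  rw [timeMapT_eq_integral_scaledTimeMapIntegrand, timeMapT_eq_integral_scaledTimeMapIntegrand,
    ← sub_pos, ← integral_sub hintγ hintβ]
  exact intervalIntegral_pos_of_pos_on (hintγ.sub hintβ)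
    (fun u hu => sub_pos.2 (scaledTimeMapIntegrand_lt hβ.1 hβγ hγ.2 (by linarith [hu.1]) hu.2)) one_pos

lemma continuousAt_timeMapIntegrand {α x : ℝ} (h : 0 < cos (2 * x) - cos (2 * α)) :
    ContinuousAt (fun p : ℝ × ℝ => timeMapIntegrand p.1 p.2) (α, x) :=
  continuousAt_const.div (by fun_prop) (sqrt_pos.2 h).ne'

lemma tendsto_timeMapT_nhdsGT {φ : ℝ} (h0 : 0 < φ) (hφ : φ < π / 2) :
    Tendsto timeMapT (𝓝[>] φ) (𝓝 (timeMapT φ)) := by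
  obtain ⟨ψ, hφψ, hψ⟩ := exists_between hφ
  simp only [funext timeMapT_eq_integral_scaledTimeMapIntegrand]
  refine tendsto_integral_filter_of_dominated_convergence (scaledTimeMapIntegrand ψ)
    (Eventually.of_forall fun α => ?_) ?_
    (intervalIntegrable_scaledTimeMapIntegrand (h0.trans hφψ) hψ) ?_
  · exact (measurable_const.mul ((measurable_timeMapIntegrand α).comp
      (measurable_id.mul_const α))).aestronglyMeasurable
  · filter_upwards [Ioo_mem_nhdsGT hφψ] with α hα
    filter_upwards [volume.ae_ne 1] with u hu1 hu
    rw [uIoc_of_le zero_le_one] at hu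
    have hnonneg : 0 ≤ scaledTimeMapIntegrand α u :=
      mul_nonneg (h0.trans hα.1).le (timeMapIntegrand_nonneg _ _)
    rw [norm_of_nonneg hnonneg]
    exact (scaledTimeMapIntegrand_lt (h0.trans hα.1) hα.2 hψ (by linarith [hu.1])
      (hu.2.lt_of_ne hu1)).le
  · filter_upwards [volume.ae_ne 1] with u hu1 hu
    rw [uIoc_of_le zero_le_one] at hu
    have hpos := cos_two_mul_sub_cos_two_mul_pos (mul_nonneg hu.1.le h0.le)
      (mul_lt_of_lt_one_left h0 (hu.2.lt_of_ne hu1)) hφ.le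
    have hcont : ContinuousAt (fun α => scaledTimeMapIntegrand α u) φ :=
      continuousAt_id.mul ((continuousAt_timeMapIntegrand hpos).comp
        (f := fun α => (α, u * α)) (by fun_prop))
    exact hcont.tendsto.mono_left nhdsWithin_le_nhds

lemma tendsto_timeMapT1_nhdsGT {φ φ₁ : ℝ} (h0 : 0 ≤ φ) (hφ : φ ≤ φ₁) (h₁ : φ₁ < π / 2) :
    Tendsto (fun α => timeMapT1 α φ) (𝓝[>] φ₁) (𝓝 (timeMapT1 φ₁ φ)) := by
  change Tendsto (fun α => ∫ x in 0..φ, timeMapIntegrand α x) _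
    (𝓝 (∫ x in 0..φ, timeMapIntegrand φ₁ x))
  refine tendsto_integral_filter_of_dominated_convergence (timeMapIntegrand φ₁)
    (Eventually.of_forall fun α => (measurable_timeMapIntegrand α).aestronglyMeasurable) ?_
    (intervalIntegrable_timeMapIntegrand le_rfl h0 hφ h₁) ?_
  · filter_upwards [Ioo_mem_nhdsGT h₁] with α hα
    filter_upwards [volume.ae_ne φ₁] with x hxφ₁ hx
    rw [uIoc_of_le h0] at hx
    rw [norm_of_nonneg (timeMapIntegrand_nonneg α x)]
    exact timeMapIntegrand_le_of_le hx.1.le ((hx.2.trans hφ).lt_of_ne hxφ₁) hα.1.le hα.2.le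
  · filter_upwards [volume.ae_ne φ₁] with x hxφ₁ hx
    rw [uIoc_of_le h0] at hx
    have hpos := cos_two_mul_sub_cos_two_mul_pos hx.1.le
      ((hx.2.trans hφ).lt_of_ne hxφ₁) h₁.le
    exact ((continuousAt_timeMapIntegrand hpos).comp (f := fun α => (α, x))
      (by fun_prop)).tendsto.mono_left nhdsWithin_le_nhds

/-- For `0 < φ₀ < φ₁ < π/2`, the map
`T_{C_r}(α) = 2T(α) + T₁(α, φ₀) − T₁(α, φ₁)` tends to
`T_* = T(φ₁) + T₁(φ₁, φ₀)` as `α → φ₁⁺`, and `T_{C_r}(α) > T_*`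
for every `α ∈ (φ₁, π/2)`. -/
theorem timeMapTCr_supercritical (φ₀ φ₁ : ℝ) (h₀ : 0 < φ₀) (h₀₁ : φ₀ < φ₁)
    (h₁ : φ₁ < π / 2) :
    Tendsto (fun α => 2 * timeMapT α + timeMapT1 α φ₀ - timeMapT1 α φ₁)
      (nhdsWithin φ₁ (Set.Ioi φ₁)) (nhds (timeMapT φ₁ + timeMapT1 φ₁ φ₀)) ∧
    ∀ α ∈ Set.Ioo φ₁ (π / 2),
      2 * timeMapT α + timeMapT1 α φ₀ - timeMapT1 α φ₁ >
        timeMapT φ₁ + timeMapT1 φ₁ φ₀ := by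
  have hφ₁ : 0 < φ₁ := h₀.trans h₀₁
  have hTT1 : timeMapT1 φ₁ φ₁ = timeMapT φ₁ := rfl
  constructor
  · have h := (((tendsto_timeMapT_nhdsGT hφ₁ h₁).const_mul 2).add
      (tendsto_timeMapT1_nhdsGT h₀.le h₀₁.le h₁)).sub (tendsto_timeMapT1_nhdsGT hφ₁.le le_rfl h₁)
    rwa [hTT1, show 2 * timeMapT φ₁ + timeMapT1 φ₁ φ₀ - timeMapT φ₁ =
      timeMapT φ₁ + timeMapT1 φ₁ φ₀ by ring] at h
  · intro α hα
    have hT := timeMapT_strictMonoOn ⟨hφ₁, h₁⟩ ⟨hφ₁.trans hα.1, hα.2⟩ hα.1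
    have hT1 := timeMapT1_sub_timeMapT1_le h₀.le h₀₁.le le_rfl hα.1.le hα.2
    linarith
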